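/- arXiv:math/0402240 — 2 statements merged into one kernel-verified Lean document; each statement's English description precedes it below -/
import Mathlib

section
/- Let K be a field and let (u_k)_{k ≥ 0} be a sequence in K satisfying the linear recurrence u_{k+d} + a_1 u_{k+d-1} + ⋯ + a_d u_k = 0 for all k ≥ 0, with a_1,…,a_d ∈ K. If the Hankel matrix M = (u_{d+i-j-1})_{1 ≤ i,j ≤ d} is singular (det M = 0), then there exist b_1,…,b_d ∈ K, not all zero, such that b_1 u_{k+d-1} + ⋯ + b_d u_k = 0 for all k ≥ 0. -/
/-!
The coefficient vector `b` is taken from the kernel of the Hankel matrix, so the sequence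
`w k = ∑ i, b i * u (k + (d - 1 - i))` vanishes for `k < d`. Being a linear combination of shifts
of `u`, the sequence `w` satisfies the same recurrence of order `d` as `u`, and a solution is
determined by its first `d` terms; hence `w = 0`.
-/

namespace LinearRecurrence

variable {R : Type*}

section CommSemiring

variable [CommSemiring R] {E : LinearRecurrence R}

theorem IsSolution.comp_add_right {u : ℕ → R} (hu : E.IsSolution u) (m : ℕ) :
    E.IsSolution fun n => u (n + m) := by
  intro n
  simpa only [add_right_comm] using hu (n + m)

theorem IsSolution.sum_mul_shift {u : ℕ → R} (hu : E.IsSolution u) {ι : Type*} (s : Finset ι)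
    (b : ι → R) (m : ι → ℕ) :
    E.IsSolution fun n => ∑ i ∈ s, b i * u (n + m i) := by
  have hmem : (∑ i ∈ s, b i • fun n => u (n + m i)) ∈ E.solSpace :=
    Submodule.sum_mem _ fun i _ => Submodule.smul_mem _ _ (hu.comp_add_right (m i))
  simp only [Finset.sum_fn, Pi.smul_def, smul_eq_mul] at hmem
  exact hmem

theorem IsSolution.eq_zero_of_forall_lt_order {u : ℕ → R} (hu : E.IsSolution u)
    (h : ∀ n < E.order, u n = 0) : u = 0 := by
  refine (E.eq_iff_eqOn_range_order u 0 hu E.solSpace.zero_mem).mpr fun n hn => ?_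
  exact h n (Finset.mem_range.mp hn)

end CommSemiring

/-- The recurrence `u (n + d) + a 0 * u (n + d - 1) + ⋯ + a (d - 1) * u n = 0`; Mathlib's
`coeffs` multiply `u n, …, u (n + d - 1)` on the other side, hence the reversal and the sign. -/
def ofMonic [CommRing R] {d : ℕ} (a : Fin d → R) : LinearRecurrence R :=
  ⟨d, fun i => -a i.rev⟩

theorem isSolution_ofMonic_iff [CommRing R] {d : ℕ} (a : Fin d → R) (u : ℕ → R) :
    (ofMonic a).IsSolution u ↔ ∀ k, u (k + d) + ∑ i : Fin d, a i * u (k + (d - 1 - i)) = 0 := by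
  have hsum : ∀ k, ∑ i : Fin d, -a i.rev * u (k + i) = -∑ i : Fin d, a i * u (k + (d - 1 - i)) :=
    fun k => by
      rw [← Equiv.sum_comp Fin.revPerm, ← Finset.sum_neg_distrib]
      simp only [Fin.revPerm_apply, Fin.rev_rev, Fin.val_rev, neg_mul]
      congr! 4
      omega
  change (∀ k, u (k + d) = ∑ i : Fin d, -a i.rev * u (k + i)) ↔ _
  simp only [hsum, ← sub_eq_zero (a := u _), sub_neg_eq_add]

end LinearRecurrence

theorem Matrix.mulVec_hankel_eq_zero_iff {R : Type*} [CommSemiring R] {d : ℕ} (u : ℕ → R)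
    (b : Fin d → R) :
    (Matrix.of fun i j : Fin d => u (d + i.val - j.val - 1)).mulVec b = 0 ↔
      ∀ k < d, ∑ i : Fin d, b i * u (k + (d - 1 - i)) = 0 := by
  have hrow : ∀ k : Fin d, (Matrix.of fun i j : Fin d => u (d + i.val - j.val - 1)).mulVec b k =
      ∑ i : Fin d, b i * u (k + (d - 1 - i)) := fun k => by
    simp only [Matrix.mulVec, dotProduct, Matrix.of_apply]
    refine Finset.sum_congr rfl fun i _ => ?_
    rw [mul_comm]
    congr 2
    omega
  exact funext_iff.trans
    ⟨fun h k hk => (hrow ⟨k, hk⟩).symm.trans (h ⟨k, hk⟩), fun h k => (hrow k).trans (h k k.2)⟩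

open LinearRecurrence in
theorem hankel_singular_gives_lower_relation_general
    (K : Type*) [Field K] (d : ℕ)
    (u : ℕ → K) (a : Fin d → K)
    (hrec : ∀ k : ℕ, u (k + d) + ∑ i : Fin d, a i * u (k + (d - 1 - i.val)) = 0)
    (hdet : (Matrix.of fun i j : Fin d => u (d + i.val - j.val - 1)).det = 0) :
    ∃ b : Fin d → K, b ≠ 0 ∧ ∀ k : ℕ, ∑ i : Fin d, b i * u (k + (d - 1 - i.val)) = 0 := by
  obtain ⟨b, hb0, hker⟩ := Matrix.exists_mulVec_eq_zero_iff.mpr hdet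
  have hsol := ((isSolution_ofMonic_iff a u).mpr hrec).sum_mul_shift Finset.univ b
    (fun i : Fin d => d - 1 - i)
  have hzero := hsol.eq_zero_of_forall_lt_order ((Matrix.mulVec_hankel_eq_zero_iff u b).mp hker)
  exact ⟨b, hb0, fun k => congrFun hzero k⟩

/-- If a sequence satisfies a monic linear recurrence of order `d`
and the Hankel matrix `(u_{d+i-j-1})` is singular, then some nonzero vector `b`
gives a lower-order linear relation valid for all `k`. -/
theorem hankel_singular_gives_lower_relation
    (K : Type*) [Field K] (d : ℕ) (hd : 0 < d)
    (u : ℕ → K) (a : Fin d → K)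
    (hrec : ∀ k : ℕ, u (k + d) + ∑ i : Fin d, a i * u (k + (d - 1 - i.val)) = 0)
    (hdet : (Matrix.of fun i j : Fin d => u (d + i.val - j.val - 1)).det = 0) :
    ∃ b : Fin d → K, b ≠ 0 ∧ ∀ k : ℕ, ∑ i : Fin d, b i * u (k + (d - 1 - i.val)) = 0 :=
  hankel_singular_gives_lower_relation_general K d u a hrec hdet
end

section
/- Let D and D̃ be domains in ℂ^n with D ⊂ D̃, D̃ connected. Let (u_k)_{k≥0} be holomorphic functions on D̃ whose restrictions to D satisfy u_{k+d} + a_1 u_{k+d-1} + ⋯ + a_d u_k = 0 on D for all k ≥ 0, where a_1,…,a_d are holomorphic on D, and suppose the Hankel determinant det(u_{d+i-j-1})_{1≤i,j≤d} is not identically zero on D. Then there exist meromorphic functions ã_1,…,ã_d on D̃ extending a_1,…,a_d such that u_{k+d} + ã_1 u_{k+d-1} + ⋯ + ã_d u_k = 0 on D̃ for all k ≥ 0. -/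
private lemma diffOn_finset_prod {X : Type*} [NormedAddCommGroup X] [NormedSpace ℂ X]
    {ι : Type*} (s : Finset ι) (f : ι → X → ℂ) {t : Set X}
    (hf : ∀ i ∈ s, DifferentiableOn ℂ (f i) t) :
    DifferentiableOn ℂ (fun x => ∏ i ∈ s, f i x) t := by
  classical
  induction s using Finset.induction with
  | empty => simpa using differentiableOn_const (1 : ℂ)
  | insert _ _ h ih =>
    simp only [Finset.prod_insert h]
    exact (hf _ (Finset.mem_insert_self _ _)).mul
      (ih fun i hi => hf i (Finset.mem_insert_of_mem hi))

private lemma diffOn_det {X : Type*} [NormedAddCommGroup X] [NormedSpace ℂ X]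
    {d : ℕ} {s : Set X} (F : X → Matrix (Fin d) (Fin d) ℂ)
    (hF : ∀ i j, DifferentiableOn ℂ (fun x => F x i j) s) :
    DifferentiableOn ℂ (fun x => (F x).det) s := by
  simp only [Matrix.det_apply']
  exact DifferentiableOn.fun_sum fun σ _ =>
    ((diffOn_finset_prod Finset.univ (fun i x => F x (σ i) i)
      fun i _ => hF (σ i) i).const_mul _)


private lemma eqOn_zero_of_holo {N : ℕ} {F : (Fin N → ℂ) → ℂ} {U : Set (Fin N → ℂ)}
    (hUo : IsOpen U) (hUc : IsPreconnected U) (hF : DifferentiableOn ℂ F U)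
    {x₀ : Fin N → ℂ} (hx₀ : x₀ ∈ U) (h0 : F =ᶠ[nhds x₀] 0) :
    Set.EqOn F 0 U := by
  classical
  set S : Set (Fin N → ℂ) := {x | F =ᶠ[nhds x] 0} with hS
  have hSo : IsOpen S := by
    rw [Metric.isOpen_iff]
    intro x hx
    obtain ⟨V, hVmem, hVF⟩ := Filter.eventuallyEq_iff_exists_mem.mp hx
    obtain ⟨W, hWV, hWo, hxW⟩ := mem_nhds_iff.mp hVmem
    obtain ⟨ε, hε, hball2⟩ := Metric.isOpen_iff.mp hWo x hxW
    refine ⟨ε, hε, fun y hy => ?_⟩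
    exact Filter.eventuallyEq_of_mem (hWo.mem_nhds (hball2 hy))
      fun w hw => hVF (hWV hw)
  have hkey : closure S ∩ U ⊆ S := by
    intro x ⟨hxc, hxU⟩
    obtain ⟨r, hr, hball⟩ := Metric.isOpen_iff.mp hUo x hxU
    obtain ⟨y, hyS, hyx⟩ : ∃ y ∈ S, dist x y < r / 2 := by
      rcases Metric.mem_closure_iff.mp hxc (r / 2) (by linarith) with ⟨y, hy1, hy2⟩
      exact ⟨y, hy1, hy2⟩
    have hysub : Metric.ball y (r / 2) ⊆ U := by
      intro z hz
      apply hball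
      have := dist_triangle z y x
      simp only [Metric.mem_ball] at hz ⊢
      have : dist z x ≤ dist z y + dist y x := dist_triangle z y x
      rw [dist_comm x y] at hyx
      linarith [Metric.mem_ball.mp hz]
    have hzero : ∀ z ∈ Metric.ball y (r / 2), F z = 0 := by
      intro z hz
      by_cases hzy : z = y
      · rw [hzy]; exact hyS.self_of_nhds
      have hdzy : (0 : ℝ) < dist z y := dist_pos.mpr hzy
      set R : ℝ := (r / 2) / dist z y with hR
      have hR1 : 1 < R := by
        rw [hR, lt_div_iff₀ hdzy]
        simpa using Metric.mem_ball.mp hz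
      set L : ℂ → (Fin N → ℂ) := fun t => y + t • (z - y) with hL
      have hLmaps : ∀ t ∈ Metric.ball (0 : ℂ) R, L t ∈ Metric.ball y (r / 2) := by
        intro t ht
        simp only [hL, Metric.mem_ball, dist_eq_norm] at ht ⊢
        have : y + t • (z - y) - y = t • (z - y) := by ring_nf
        rw [this, norm_smul, ← dist_eq_norm]
        have h2 : ‖t‖ < R := by simpa using ht
        have h3 : ‖t‖ * dist z y < R * dist z y := mul_lt_mul_of_pos_right h2 hdzy
        have hRd : R * dist z y = r / 2 := by
          rw [hR]; exact div_mul_cancel₀ _ (ne_of_gt hdzy)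
        linarith
      have hLdiff : DifferentiableOn ℂ (fun t => F (L t)) (Metric.ball (0 : ℂ) R) := by
        apply DifferentiableOn.comp hF
        · exact (differentiableOn_const y).add
            ((differentiableOn_id).smul_const (z - y))
        · intro t ht; exact hysub (hLmaps t ht)
      have hana : AnalyticOnNhd ℂ (fun t => F (L t)) (Metric.ball (0 : ℂ) R) :=
        hLdiff.analyticOnNhd Metric.isOpen_ball
      have h00 : (fun t => F (L t)) =ᶠ[nhds (0 : ℂ)] 0 := by
        have hcont : ContinuousAt L 0 :=
          (continuous_const.add (continuous_id.smul continuous_const)).continuousAt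
        have hL0 : L 0 = y := by simp [hL]
        have hyS' : F =ᶠ[nhds (L 0)] 0 := hL0 ▸ hyS
        filter_upwards [hcont.tendsto.eventually hyS'] with t ht using ht
      have hEq : Set.EqOn (fun t => F (L t)) 0 (Metric.ball (0 : ℂ) R) :=
        hana.eqOn_zero_of_preconnected_of_eventuallyEq_zero
          (convex_ball _ _).isPreconnected (Metric.mem_ball_self (by linarith)) h00
      have h1 : (1 : ℂ) ∈ Metric.ball (0 : ℂ) R := by
        simp only [Metric.mem_ball, dist_zero_right, norm_one]; exact hR1
      have := hEq h1
      simpa [hL] using this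
    have : Metric.ball y (r / 2) ∈ nhds x := by
      apply Metric.isOpen_ball.mem_nhds
      simpa [Metric.mem_ball, dist_comm] using hyx
    exact Filter.eventuallyEq_of_mem this hzero
  have hsub : U ⊆ S := hUc.subset_of_closure_inter_subset hSo ⟨x₀, hx₀, h0⟩ hkey
  intro x hx
  exact (hsub hx).self_of_nhds

open Matrix in
/-- holomorphic functions `u_k` on `D̃` whose restrictions to a
subdomain `D` satisfy a monic linear recurrence with holomorphic coefficients
`a_i` on `D`, with not-identically-zero Hankel determinant on `D`, admit
meromorphic coefficients `ã_i = g_i / h` on `D̃` extending the `a_i` and such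
that the recurrence holds on all of `D̃` (in cleared-denominator form). -/
theorem recurrence_coefficients_extend_meromorphically
    (n d : ℕ) (hd : 0 < d)
    (D Dt : Set (Fin n → ℂ)) (hDo : IsOpen D) (hDc : IsConnected D)
    (hDto : IsOpen Dt) (hDtc : IsConnected Dt) (hsub : D ⊆ Dt)
    (u : ℕ → (Fin n → ℂ) → ℂ) (hu : ∀ k, DifferentiableOn ℂ (u k) Dt)
    (a : Fin d → (Fin n → ℂ) → ℂ) (ha : ∀ i, DifferentiableOn ℂ (a i) D)
    (hrec : ∀ k : ℕ, ∀ x ∈ D,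
      u (k + d) x + ∑ i : Fin d, a i x * u (k + (d - 1 - i.val)) x = 0)
    (hdet : ∃ x ∈ D,
      (Matrix.of fun i j : Fin d => u (d + i.val - j.val - 1) x).det ≠ 0) :
    ∃ g : Fin d → (Fin n → ℂ) → ℂ, ∃ h : (Fin n → ℂ) → ℂ,
      (∀ i, DifferentiableOn ℂ (g i) Dt) ∧ DifferentiableOn ℂ h Dt ∧
      (∃ x ∈ Dt, h x ≠ 0) ∧
      (∀ i : Fin d, ∀ x ∈ D, g i x = h x * a i x) ∧
      (∀ k : ℕ, ∀ x ∈ Dt,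
        h x * u (k + d) x + ∑ i : Fin d, g i x * u (k + (d - 1 - i.val)) x = 0) := by
  classical
  set M : (Fin n → ℂ) → Matrix (Fin d) (Fin d) ℂ :=
    fun x => Matrix.of fun i j : Fin d => u (d + i.val - j.val - 1) x with hM
  set h : (Fin n → ℂ) → ℂ := fun x => (M x).det with hh
  set b : (Fin n → ℂ) → Fin d → ℂ := fun x j => u (j.val + d) x with hb
  set g : Fin d → (Fin n → ℂ) → ℂ :=
    fun i x => -(((M x).adjugate) *ᵥ (b x)) i with hg
  -- key algebraic identity on D
  have hmul : ∀ x ∈ D, M x *ᵥ (fun i => a i x) = -(b x) := by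
    intro x hx
    funext k
    have hr := hrec k.val x hx
    simp only [Matrix.mulVec, dotProduct, Pi.neg_apply, hM, hb, Matrix.of_apply]
    have : ∀ i : Fin d, u (d + k.val - i.val - 1) x * a i x
        = a i x * u (k.val + (d - 1 - i.val)) x := by
      intro i
      have : d + k.val - i.val - 1 = k.val + (d - 1 - i.val) := by
        have := i.isLt; omega
      rw [this, mul_comm]
    rw [Finset.sum_congr rfl fun i _ => this i]
    linear_combination hr
  have hgd : ∀ i : Fin d, ∀ x ∈ D, g i x = h x * a i x := by
    intro i x hx
    have h1 : (M x).adjugate *ᵥ (M x *ᵥ (fun j => a j x)) = (M x).det • (fun j => a j x) := by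
      rw [Matrix.mulVec_mulVec, Matrix.adjugate_mul, Matrix.smul_mulVec,
        Matrix.one_mulVec]
    rw [hmul x hx, Matrix.mulVec_neg] at h1
    have := congrFun h1 i
    simp only [Pi.neg_apply, Pi.smul_apply, smul_eq_mul] at this
    simpa [hg, hh] using this
  -- differentiability
  have hudiff : ∀ i j : Fin d, DifferentiableOn ℂ (fun x => M x i j) Dt := by
    intro i j; exact hu _
  have hhd : DifferentiableOn ℂ h Dt := diffOn_det M hudiff
  have hgdiff : ∀ i, DifferentiableOn ℂ (g i) Dt := by
    intro i
    have : ∀ j : Fin d, DifferentiableOn ℂ (fun x => (M x).adjugate i j) Dt := by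
      intro j
      have : (fun x => (M x).adjugate i j)
          = fun x => ((M x).updateRow j (Pi.single i 1)).det := by
        funext x; rw [Matrix.adjugate_apply]
      rw [this]
      apply diffOn_det
      intro k l
      by_cases hk : k = j
      · simp only [Matrix.updateRow_apply, hk, if_true]
        exact differentiableOn_const _
      · simp only [Matrix.updateRow_apply, hk, if_false]
        exact hudiff k l
    have : DifferentiableOn ℂ
        (fun x => ∑ j : Fin d, (M x).adjugate i j * b x j) Dt :=
      DifferentiableOn.fun_sum fun j _ => (this j).mul (hu _)
    have h2 : g i = fun x => -(∑ j : Fin d, (M x).adjugate i j * b x j) := by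
      funext x; simp [hg, Matrix.mulVec, dotProduct]
    rw [h2]
    exact this.neg
  -- the recurrence on Dt, via the identity principle
  have hrecDt : ∀ k : ℕ, ∀ x ∈ Dt,
      h x * u (k + d) x + ∑ i : Fin d, g i x * u (k + (d - 1 - i.val)) x = 0 := by
    intro k
    set F : (Fin n → ℂ) → ℂ :=
      fun x => h x * u (k + d) x + ∑ i : Fin d, g i x * u (k + (d - 1 - i.val)) x with hF
    have hFdiff : DifferentiableOn ℂ F Dt :=
      (hhd.mul (hu _)).add
        (DifferentiableOn.fun_sum fun i _ => (hgdiff i).mul (hu _))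
    have hFD : ∀ x ∈ D, F x = 0 := by
      intro x hx
      have : F x = h x * (u (k + d) x + ∑ i : Fin d, a i x * u (k + (d - 1 - i.val)) x) := by
        simp only [hF, mul_add, Finset.mul_sum]
        congr 1
        exact Finset.sum_congr rfl fun i _ => by rw [hgd i x hx]; ring
      rw [this, hrec k x hx, mul_zero]
    obtain ⟨x₀, hx₀⟩ := hDc.nonempty
    have hx₀t : x₀ ∈ Dt := hsub hx₀
    have hev : F =ᶠ[nhds x₀] 0 := by
      filter_upwards [hDo.mem_nhds hx₀] with y hy using hFD y hy
    intro x hx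
    exact eqOn_zero_of_holo hDto hDtc.isPreconnected hFdiff hx₀t hev hx
  obtain ⟨x₁, hx₁, hx₁d⟩ := hdet
  exact ⟨g, h, hgdiff, hhd, ⟨x₁, hsub hx₁, hx₁d⟩, hgd, hrecDt⟩
end
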